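/- Let n ≥ 2 be an integer with prime factorization n = ∏_i p_i^{α_i}. Then L(n) = max_i L(p_i^{α_i}). -/
import Mathlib


open Real Filter

/-- The Carmichael lambda function: the exponent of the multiplicative group `(ZMod n)ˣ`. -/
noncomputable def carmichael (n : ℕ) : ℕ := Monoid.exponent (ZMod n)ˣ

/-- `L n` is the smallest nonnegative integer `k` such that the `k`-th iterate of the
Carmichael function at `n` equals `1`. -/
noncomputable def L (n : ℕ) : ℕ := sInf {k | carmichael^[k] n = 1}

lemma carmichael_pos (n : ℕ) : 0 < carmichael n := by
  unfold carmichael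
  rcases Nat.eq_zero_or_pos n with rfl | hn
  · exact Monoid.exponent_pos_of_exists 2 (by norm_num) (fun g => Int.units_sq g)
  · haveI : NeZero n := ⟨hn.ne'⟩
    exact Monoid.exponent_pos_of_exists _ (Fintype.card_pos)
      (fun g => pow_card_eq_one)

lemma carmichael_one : carmichael 1 = 1 :=
  Monoid.exp_eq_one_of_subsingleton

lemma carmichael_dvd_of_dvd {a b : ℕ} (h : a ∣ b) (hb : b ≠ 0) :
    carmichael a ∣ carmichael b := by
  haveI : NeZero b := ⟨hb⟩
  exact MonoidHom.exponent_dvd (ZMod.unitsMap_surjective h)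

lemma carmichael_lt {n : ℕ} (hn : 2 ≤ n) : carmichael n < n := by
  haveI : NeZero n := ⟨by omega⟩
  have h1 : carmichael n ∣ Fintype.card (ZMod n)ˣ := Group.exponent_dvd_card
  have h2 : Fintype.card (ZMod n)ˣ = n.totient := ZMod.card_units_eq_totient n
  have h3 : n.totient < n := Nat.totient_lt n (by omega)
  calc carmichael n ≤ n.totient := by
        rw [h2] at h1
        exact Nat.le_of_dvd (Nat.totient_pos.mpr (by omega)) h1
    _ < n := h3

lemma carmichael_lcm_dvd {x y : ℕ} (hx : x ≠ 0) (hy : y ≠ 0) :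
    carmichael (Nat.lcm x y) ∣ Nat.lcm (carmichael x) (carmichael y) := by
  set m := Nat.lcm x y with hm_def
  have hm : m ≠ 0 := Nat.lcm_ne_zero hx hy
  haveI : NeZero m := ⟨hm⟩
  haveI : NeZero x := ⟨hx⟩
  haveI : NeZero y := ⟨hy⟩
  apply Monoid.exponent_dvd_of_forall_pow_eq_one
  intro u
  set Lc := Nat.lcm (carmichael x) (carmichael y) with hLc
  set w : (ZMod m)ˣ := u ^ Lc with hw
  -- the image of w in (ZMod x)ˣ and (ZMod y)ˣ is 1
  have key : ∀ (t : ℕ) (ht : t ∣ m), carmichael t ∣ Lc →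
      ZMod.castHom ht (ZMod t) ((w : ZMod m)) = 1 := by
    intro t ht hdvd
    have h1 : ZMod.unitsMap ht w = 1 := by
      rw [hw, map_pow]
      obtain ⟨c, hc⟩ := hdvd
      rw [hc, pow_mul]
      rw [show carmichael t = Monoid.exponent (ZMod t)ˣ from rfl,
        Monoid.pow_exponent_eq_one, one_pow]
    have : ((ZMod.unitsMap ht w : (ZMod t)ˣ) : ZMod t) = 1 := by
      rw [h1]; rfl
    rwa [ZMod.unitsMap_def, Units.coe_map] at this
  have hx1 : ZMod.castHom (Nat.dvd_lcm_left x y) (ZMod x) ((w : ZMod m)) = 1 :=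
    key x (Nat.dvd_lcm_left x y) (Nat.dvd_lcm_left _ _)
  have hy1 : ZMod.castHom (Nat.dvd_lcm_right x y) (ZMod y) ((w : ZMod m)) = 1 :=
    key y (Nat.dvd_lcm_right x y) (Nat.dvd_lcm_right _ _)
  -- deduce w = 1
  have hz : ((w : ZMod m) - 1) = 0 := by
    set z : ZMod m := (w : ZMod m) - 1 with hz_def
    have hval : ((z.val : ZMod m)) = z := ZMod.natCast_zmod_val z
    have hdx : x ∣ z.val := by
      rw [← ZMod.natCast_eq_zero_iff]
      have : ((z.val : ZMod x)) = ZMod.castHom (Nat.dvd_lcm_left x y) (ZMod x) ((z.val : ZMod m)) := by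
        rw [map_natCast]
      rw [this, hval, hz_def, map_sub, hx1, map_one, sub_self]
    have hdy : y ∣ z.val := by
      rw [← ZMod.natCast_eq_zero_iff]
      have : ((z.val : ZMod y)) = ZMod.castHom (Nat.dvd_lcm_right x y) (ZMod y) ((z.val : ZMod m)) := by
        rw [map_natCast]
      rw [this, hval, hz_def, map_sub, hy1, map_one, sub_self]
    have hdm : m ∣ z.val := Nat.lcm_dvd hdx hdy
    have : z.val = 0 := Nat.eq_zero_of_dvd_of_lt hdm (ZMod.val_lt z)
    rw [← hval, this, Nat.cast_zero]
  have : (w : ZMod m) = 1 := by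
    have := sub_eq_zero.mp hz
    exact this
  exact Units.ext this

lemma carmichael_iter_ne_zero {n : ℕ} (hn : n ≠ 0) (k : ℕ) :
    carmichael^[k] n ≠ 0 := by
  induction k with
  | zero => simpa
  | succ k ih =>
    rw [Function.iterate_succ_apply']
    exact (carmichael_pos _).ne'

lemma carmichael_iter_dvd {a b : ℕ} (h : a ∣ b) (hb : b ≠ 0) (k : ℕ) :
    carmichael^[k] a ∣ carmichael^[k] b := by
  induction k with
  | zero => simpa
  | succ k ih =>
    rw [Function.iterate_succ_apply', Function.iterate_succ_apply']
    exact carmichael_dvd_of_dvd ih (carmichael_iter_ne_zero hb k)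

lemma carmichael_iter_lcm_dvd {x y : ℕ} (hx : x ≠ 0) (hy : y ≠ 0) (k : ℕ) :
    carmichael^[k] (Nat.lcm x y) ∣ Nat.lcm (carmichael^[k] x) (carmichael^[k] y) := by
  induction k with
  | zero => simp
  | succ k ih =>
    rw [Function.iterate_succ_apply', Function.iterate_succ_apply',
      Function.iterate_succ_apply']
    calc carmichael (carmichael^[k] (Nat.lcm x y))
        ∣ carmichael (Nat.lcm (carmichael^[k] x) (carmichael^[k] y)) :=
          carmichael_dvd_of_dvd ih
            (Nat.lcm_ne_zero (carmichael_iter_ne_zero hx k) (carmichael_iter_ne_zero hy k))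
      _ ∣ Nat.lcm (carmichael (carmichael^[k] x)) (carmichael (carmichael^[k] y)) :=
          carmichael_lcm_dvd (carmichael_iter_ne_zero hx k) (carmichael_iter_ne_zero hy k)

lemma carmichael_iter_one (k : ℕ) : carmichael^[k] 1 = 1 :=
  Function.iterate_fixed carmichael_one k

lemma exists_carmichael_iter_eq_one : ∀ n : ℕ, n ≠ 0 → ∃ k, carmichael^[k] n = 1 := by
  intro n
  induction n using Nat.strong_induction_on with
  | _ n ih =>
    intro hn
    rcases Nat.lt_or_ge n 2 with h | h
    · interval_cases n
      · omega
      · exact ⟨0, rfl⟩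
    · have hlt : carmichael n < n := carmichael_lt h
      obtain ⟨k, hk⟩ := ih (carmichael n) hlt (carmichael_pos n).ne'
      exact ⟨k + 1, by rwa [Function.iterate_succ_apply]⟩

lemma carmichael_iter_one_of_le {n j k : ℕ} (h : carmichael^[j] n = 1) (hjk : j ≤ k) :
    carmichael^[k] n = 1 := by
  obtain ⟨d, rfl⟩ := Nat.exists_eq_add_of_le hjk
  rw [add_comm, Function.iterate_add_apply, h, carmichael_iter_one]

lemma L_le_iff {n : ℕ} (hn : n ≠ 0) (k : ℕ) :
    L n ≤ k ↔ carmichael^[k] n = 1 := by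
  constructor
  · intro hk
    have hmem : carmichael^[L n] n = 1 :=
      Nat.sInf_mem (exists_carmichael_iter_eq_one n hn)
    exact carmichael_iter_one_of_le hmem hk
  · intro hk
    exact Nat.sInf_le hk

lemma carmichael_iter_eq_one_iff {n : ℕ} (hn : n ≠ 0) (k : ℕ) :
    carmichael^[k] n = 1 ↔
      ∀ p ∈ n.primeFactors, carmichael^[k] (p ^ n.factorization p) = 1 := by
  constructor
  · intro h p hp
    have hdvd : p ^ n.factorization p ∣ n := Nat.ordProj_dvd n p
    have := carmichael_iter_dvd hdvd hn k
    rw [h] at this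
    exact Nat.dvd_one.mp this
  · induction n using Nat.strong_induction_on with
    | _ n ih =>
      intro hfac
      rcases Nat.lt_or_ge n 2 with h2 | h2
      · interval_cases n
        · omega
        · exact carmichael_iter_one k
      · -- pick the smallest prime factor
        set p := n.minFac with hp_def
        have hp : p.Prime := Nat.minFac_prime (by omega)
        have hpmem : p ∈ n.primeFactors := by
          rw [Nat.mem_primeFactors]
          exact ⟨hp, Nat.minFac_dvd n, hn⟩
        set a := p ^ n.factorization p with ha_def
        set m := ordCompl[p] n with hm_def
        have ha_pos : a ≠ 0 := (pow_pos hp.pos _).ne'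
        have hm_pos : m ≠ 0 := (Nat.ordCompl_pos p hn).ne'
        have hmul : a * m = n := Nat.ordProj_mul_ordCompl_eq_self n p
        have hcop : Nat.Coprime a m := (Nat.coprime_ordCompl hp hn).pow_left _
        have hlcm : Nat.lcm a m = n := by rw [hcop.lcm_eq_mul, hmul]
        have hfp : 1 ≤ n.factorization p := by
          rw [← Nat.Prime.dvd_iff_one_le_factorization hp hn]
          exact Nat.minFac_dvd n
        have ha2 : 2 ≤ a := by
          calc 2 ≤ p := hp.two_le
            _ = p ^ 1 := (pow_one p).symm
            _ ≤ p ^ n.factorization p := Nat.pow_le_pow_right hp.pos hfp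
        have hmlt : m < n := by
          rcases Nat.lt_or_ge m n with h | h
          · exact h
          · exfalso; nlinarith [Nat.pos_of_ne_zero hm_pos]
        -- hypothesis for m
        have hm_fac : ∀ q ∈ m.primeFactors,
            carmichael^[k] (q ^ m.factorization q) = 1 := by
          intro q hq
          have hfe : m.factorization = n.factorization.erase p :=
            Nat.factorization_ordCompl n p
          have hq_supp : q ∈ (n.factorization.erase p).support := by
            rw [← hfe, Nat.support_factorization]
            exact hq
          rw [Finsupp.support_erase, Finset.mem_erase] at hq_supp
          obtain ⟨hqp, hq_n⟩ := hq_supp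
          have hvq : m.factorization q = n.factorization q := by
            rw [hfe, Finsupp.erase_ne hqp]
          rw [hvq]
          exact hfac q (by rwa [Nat.support_factorization] at hq_n)
        have hm1 : carmichael^[k] m = 1 := ih m hmlt hm_pos hm_fac
        have ha1 : carmichael^[k] a = 1 := hfac p hpmem
        have := carmichael_iter_lcm_dvd ha_pos hm_pos k
        rw [hlcm, ha1, hm1] at this
        simpa using this

/-- For `n ≥ 2` with prime factorization `n = ∏ p^{α_p}`, `L n = max_p L (p^{α_p})`. -/
theorem L_eq_sup_over_prime_powers (n : ℕ) (hn : 2 ≤ n) :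
    L n = n.primeFactors.sup (fun p => L (p ^ n.factorization p)) := by
  have hn0 : n ≠ 0 := by omega
  apply le_antisymm
  · rw [L_le_iff hn0, carmichael_iter_eq_one_iff hn0]
    intro p hp
    have hp' : p.Prime := Nat.prime_of_mem_primeFactors hp
    have hpow0 : p ^ n.factorization p ≠ 0 := (pow_pos hp'.pos _).ne'
    have h1 : carmichael^[L (p ^ n.factorization p)] (p ^ n.factorization p) = 1 :=
      Nat.sInf_mem (exists_carmichael_iter_eq_one _ hpow0)
    exact carmichael_iter_one_of_le h1 (Finset.le_sup (f := fun p => L (p ^ n.factorization p)) hp)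
  · rw [Finset.sup_le_iff]
    intro p hp
    have hp' : p.Prime := Nat.prime_of_mem_primeFactors hp
    have hpow0 : p ^ n.factorization p ≠ 0 := (pow_pos hp'.pos _).ne'
    rw [L_le_iff hpow0]
    have hmem : carmichael^[L n] n = 1 :=
      Nat.sInf_mem (exists_carmichael_iter_eq_one n hn0)
    exact (carmichael_iter_eq_one_iff hn0 (L n)).mp hmem p hp
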